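/- arXiv:1304.1845 — 3 statements merged into one kernel-verified Lean document; each statement's English description precedes it below -/
import Mathlib

section
/- For every real number s > 0, the ratio x^s · Γ(x) / Γ(x + s) tends to 1 as the real number x tends to infinity, where Γ is the real Gamma function. -/
open Filter Topology

private lemma log_Gamma_step {y : ℝ} (hy : 0 < y) :
    Real.log (Real.Gamma (y + 1)) - Real.log (Real.Gamma y) = Real.log y := by
  rw [Real.Gamma_add_one hy.ne', Real.log_mul hy.ne'
    (Real.Gamma_pos_of_pos hy).ne']
  ring

/-- For every `s > 0`, `x^s · Γ(x) / Γ(x + s) → 1` as `x → ∞`. -/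
theorem gamma_ratio_tendsto_one (s : ℝ) (hs : 0 < s) :
    Tendsto (fun x : ℝ => x ^ s * Real.Gamma x / Real.Gamma (x + s))
      atTop (𝓝 1) := by
  have hconv := Real.convexOn_log_Gamma
  -- lower/upper bounds for x > 1
  have key : ∀ x : ℝ, 1 < x →
      (x / (x + s)) ^ s ≤ x ^ s * Real.Gamma x / Real.Gamma (x + s) ∧
      x ^ s * Real.Gamma x / Real.Gamma (x + s) ≤ (x / (x - 1)) ^ s := by
    intro x hx
    have hx0 : (0:ℝ) < x := lt_trans one_pos hx
    have hx1 : (0:ℝ) < x - 1 := by linarith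
    have hxs : (0:ℝ) < x + s := by linarith
    have hG : 0 < Real.Gamma x := Real.Gamma_pos_of_pos hx0
    have hGs : 0 < Real.Gamma (x + s) := Real.Gamma_pos_of_pos hxs
    set f : ℝ → ℝ := Real.log ∘ Real.Gamma with hf
    -- lower slope bound
    have hlo := hconv.slope_mono_adjacent (x := x - 1) (y := x) (z := x + s)
      (Set.mem_Ioi.2 hx1) (Set.mem_Ioi.2 hxs) (by linarith) (by linarith)
    have hhi := hconv.slope_mono_adjacent (x := x) (y := x + s) (z := x + s + 1)
      (Set.mem_Ioi.2 hx0) (Set.mem_Ioi.2 (by linarith)) (by linarith) (by linarith)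
    have e1 : f x - f (x - 1) = Real.log (x - 1) := by
      have h := log_Gamma_step hx1
      rw [sub_add_cancel] at h
      exact h
    have e2 : f (x + s + 1) - f (x + s) = Real.log (x + s) := log_Gamma_step hxs
    rw [show x - (x - 1) = (1:ℝ) by ring, div_one, e1, show x + s - x = s by ring] at hlo
    rw [show x + s - x = s by ring, show x + s + 1 - (x + s) = (1:ℝ) by ring,
      div_one, e2] at hhi
    have hlo' : s * Real.log (x - 1) ≤ f (x + s) - f x := by
      rw [le_div_iff₀ hs] at hlo; linarith [mul_comm (Real.log (x-1)) s]
    have hhi' : f (x + s) - f x ≤ s * Real.log (x + s) := by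
      rw [div_le_iff₀ hs] at hhi; linarith [mul_comm (Real.log (x+s)) s]
    -- translate to ratios
    have hratio_pos : 0 < x ^ s * Real.Gamma x / Real.Gamma (x + s) :=
      div_pos (mul_pos (Real.rpow_pos_of_pos hx0 s) hG) hGs
    have hlogratio : Real.log (x ^ s * Real.Gamma x / Real.Gamma (x + s))
        = s * Real.log x + f x - f (x + s) := by
      rw [Real.log_div (mul_pos (Real.rpow_pos_of_pos hx0 s) hG).ne' hGs.ne',
        Real.log_mul (Real.rpow_pos_of_pos hx0 s).ne' hG.ne',
        Real.log_rpow hx0]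
      simp only [hf, Function.comp_apply]
    constructor
    · rw [← Real.log_le_log_iff (Real.rpow_pos_of_pos (div_pos hx0 hxs) s) hratio_pos,
        Real.log_rpow (div_pos hx0 hxs), hlogratio, Real.log_div hx0.ne' hxs.ne']
      nlinarith
    · rw [← Real.log_le_log_iff hratio_pos (Real.rpow_pos_of_pos (div_pos hx0 hx1) s),
        Real.log_rpow (div_pos hx0 hx1), hlogratio, Real.log_div hx0.ne' hx1.ne']
      nlinarith
  -- limits of bounds
  have hdiv1 : Tendsto (fun x : ℝ => x / (x + s)) atTop (𝓝 1) := by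
    have : (fun x : ℝ => x / (x + s)) =ᶠ[atTop] fun x => 1 / (1 + s / x) := by
      filter_upwards [eventually_gt_atTop 0] with x hx
      field_simp
    rw [tendsto_congr' this]
    have : Tendsto (fun x : ℝ => 1 + s / x) atTop (𝓝 (1 + 0)) :=
      tendsto_const_nhds.add (tendsto_const_nhds.div_atTop tendsto_id)
    simpa using this.inv₀ (by norm_num)
  have hdiv2 : Tendsto (fun x : ℝ => x / (x - 1)) atTop (𝓝 1) := by
    have : (fun x : ℝ => x / (x - 1)) =ᶠ[atTop] fun x => 1 / (1 - 1 / x) := by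
      filter_upwards [eventually_gt_atTop 1] with x hx
      field_simp
    rw [tendsto_congr' this]
    have : Tendsto (fun x : ℝ => 1 - 1 / x) atTop (𝓝 (1 - 0)) :=
      tendsto_const_nhds.sub (tendsto_const_nhds.div_atTop tendsto_id)
    simpa using this.inv₀ (by norm_num)
  have hlim1 : Tendsto (fun x : ℝ => (x / (x + s)) ^ s) atTop (𝓝 1) := by
    have := hdiv1.rpow (tendsto_const_nhds : Tendsto (fun _ : ℝ => s) atTop (𝓝 s))
      (Or.inl one_ne_zero)
    simpa using this
  have hlim2 : Tendsto (fun x : ℝ => (x / (x - 1)) ^ s) atTop (𝓝 1) := by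
    have := hdiv2.rpow (tendsto_const_nhds : Tendsto (fun _ : ℝ => s) atTop (𝓝 s))
      (Or.inl one_ne_zero)
    simpa using this
  refine tendsto_of_tendsto_of_tendsto_of_le_of_le' hlim1 hlim2 ?_ ?_
  · filter_upwards [eventually_gt_atTop 1] with x hx using (key x hx).1
  · filter_upwards [eventually_gt_atTop 1] with x hx using (key x hx).2
end

section
/- For all real numbers d > 0 and ε > 0, there exists γ > 0 such that the following holds: if G(n, d/n) denotes the random simple graph on n vertices in which each of the C(n,2) possible edges is present independently with probability min(d/n, 1), then the probability that there exists a vertex subset S with 2 ≤ |S| ≤ γ·n whose induced subgraph contains at least (1 + ε/2)·|S| edges (equivalently, has average degree at least 2 + ε) tends to 0 as n → ∞. -/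
/-!
First-moment method. A set `S` of `k` vertices spanning `m = ⌈(1 + ε/2) k⌉` edges contains `m`
present pairs among at most `k²` candidates, so the expected number of such sets is at most
`C(n, k) · C(k², m) · (d/n)^m ≤ A^k (k/n)^(m-k)` with `A` depending only on `d` and `ε`.
Since `m - k ≥ εk/2` and `k/n ≤ γ`, this is at most `γ⁻¹ (k/n) (A γ^(ε/2))^k ≤ γ⁻¹ (k/n) 2^(-k)`
once `γ` is small, and summing over `k` leaves a bound `2γ⁻¹/n → 0`.
-/

open Filter Topology MeasureTheory Finset
open scoped NNReal ENNReal

lemma Nat.choose_le_three_mul_div_pow (n k : ℕ) : (n.choose k : ℝ) ≤ (3 * n / k) ^ k := by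
  rcases Nat.eq_zero_or_pos k with rfl | hk
  · simp
  have hk0 : (0 : ℝ) < k := by exact_mod_cast hk
  have hfact : (k : ℝ) ^ k ≤ 3 ^ k * k.factorial := by
    have h := Real.pow_div_factorial_le_exp k hk0.le k
    rw [div_le_iff₀ (by positivity)] at h
    calc (k : ℝ) ^ k ≤ Real.exp k * k.factorial := h
      _ = Real.exp 1 ^ k * k.factorial := by rw [← Real.exp_nat_mul, mul_one]
      _ ≤ 3 ^ k * k.factorial := by
        gcongr
        exact (Real.exp_one_lt_d9.trans (by norm_num)).le
  calc (n.choose k : ℝ) ≤ n ^ k / k.factorial := Nat.choose_le_pow_div k n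
    _ ≤ (3 * n / k) ^ k := by
      rw [div_pow, mul_pow, div_le_div_iff₀ (by positivity) (by positivity)]
      calc (n : ℝ) ^ k * k ^ k ≤ n ^ k * (3 ^ k * k.factorial) := by gcongr
        _ = 3 ^ k * n ^ k * k.factorial := by ring

lemma choose_mul_choose_sq_mul_pow_le {n k m : ℕ} {d p : ℝ} (hn : 0 < n) (hk : 0 < k)
    (hkm : k ≤ m) (hp : 0 ≤ p) (hpd : p ≤ d / n) :
    (n.choose k : ℝ) * ((k ^ 2).choose m : ℝ) * p ^ m
      ≤ 3 ^ (k + m) * d ^ m * ((k : ℝ) / n) ^ (m - k) := by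
  have hn0 : (0 : ℝ) < n := by exact_mod_cast hn
  have hk0 : (0 : ℝ) < k := by exact_mod_cast hk
  have hkm' : (k : ℝ) ≤ m := by exact_mod_cast hkm
  have hsq : ((k ^ 2).choose m : ℝ) ≤ (3 * k) ^ m := by
    calc ((k ^ 2).choose m : ℝ) ≤ (3 * ((k ^ 2 : ℕ) : ℝ) / m) ^ m :=
          Nat.choose_le_three_mul_div_pow _ _
      _ ≤ (3 * k) ^ m := by
        gcongr
        rw [div_le_iff₀ (hk0.trans_le hkm')]
        push_cast
        nlinarith
  obtain ⟨r, rfl⟩ := Nat.exists_eq_add_of_le hkm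
  calc (n.choose k : ℝ) * ((k ^ 2).choose (k + r) : ℝ) * p ^ (k + r)
      ≤ (3 * n / k) ^ k * (3 * k) ^ (k + r) * (d / n) ^ (k + r) := by
        gcongr ?_ * ?_ * ?_
        · exact Nat.choose_le_three_mul_div_pow n k
        · exact pow_le_pow_left₀ hp hpd _
    _ = 3 ^ (k + (k + r)) * d ^ (k + r) * ((k : ℝ) / n) ^ (k + r - k) := by
        rw [Nat.add_sub_cancel_left]
        simp only [div_pow, mul_pow, pow_add]
        field_simp

lemma pow_le_mul_inv_mul_rpow_pow {x γ s : ℝ} {r k : ℕ} (hx : 0 ≤ x) (hxγ : x ≤ γ)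
    (hγ : 0 < γ) (hγ1 : γ ≤ 1) (hr : 1 ≤ r) (hsr : s * k ≤ r) :
    x ^ r ≤ x * γ⁻¹ * (γ ^ s) ^ k := by
  obtain ⟨r, rfl⟩ := Nat.exists_eq_add_of_le hr
  calc x ^ (1 + r) = x * x ^ r := by ring
    _ ≤ x * γ ^ (r : ℝ) := by rw [Real.rpow_natCast]; gcongr
    _ ≤ x * γ ^ (s * k - 1) := by
        refine mul_le_mul_of_nonneg_left (Real.rpow_le_rpow_of_exponent_ge hγ hγ1 ?_) hx
        push_cast at hsr
        linarith
    _ = x * γ⁻¹ * (γ ^ s) ^ k := by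
        rw [Real.rpow_sub hγ, Real.rpow_one, Real.rpow_mul hγ.le, Real.rpow_natCast]
        ring

lemma sum_range_mul_half_pow_le_two (N : ℕ) :
    ∑ k ∈ range N, (k : ℝ) * (1 / 2) ^ k ≤ 2 := by
  have hr : ‖(1 / 2 : ℝ)‖ < 1 := by norm_num
  calc ∑ k ∈ range N, (k : ℝ) * (1 / 2) ^ k ≤ ∑' k : ℕ, (k : ℝ) * (1 / 2) ^ k :=
        (summable_pow_mul_geometric_of_norm_lt_one 1 hr |>.congr fun k => by simp).sum_le_tsum
          _ fun k _ => by positivity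
    _ = 2 := by rw [tsum_coe_mul_geometric_of_norm_lt_one hr]; norm_num

lemma three_pow_add_mul_pow_le_max_pow {d : ℝ} (hd : 0 ≤ d) {k m M : ℕ} (hM : k + 2 * m ≤ M * k) :
    3 ^ (k + m) * d ^ m ≤ (max d 3 ^ M) ^ k := by
  have hB : 1 ≤ max d 3 := le_max_of_le_right (by norm_num)
  calc (3 : ℝ) ^ (k + m) * d ^ m ≤ max d 3 ^ (k + m) * max d 3 ^ m := by
        gcongr
        exacts [le_max_right _ _, le_max_left _ _]
    _ = max d 3 ^ (k + 2 * m) := by ring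
    _ ≤ max d 3 ^ (M * k) := pow_le_pow_right₀ hB hM
    _ = (max d 3 ^ M) ^ k := pow_mul _ _ _

/-- The left side bounds the expected number of `k`-sets spanning `⌈(1 + ε/2) k⌉` edges. -/
lemma choose_mul_choose_sq_mul_pow_ceil_le {d ε γ : ℝ} (hd : 0 ≤ d) (hε : 0 < ε) (hγ : 0 < γ)
    (hγ1 : γ ≤ 1) (hγd : max d 3 ^ ⌈4 + ε⌉₊ * γ ^ (ε / 2) ≤ 1 / 2) {n k : ℕ} (hk : 2 ≤ k)
    (hkn : (k : ℝ) ≤ γ * n) :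
    (n.choose k : ℝ) * ((k ^ 2).choose ⌈(1 + ε / 2) * k⌉₊ : ℝ) *
        min (d / n) 1 ^ ⌈(1 + ε / 2) * k⌉₊
      ≤ γ⁻¹ * (k / n) * (1 / 2) ^ k := by
  set m := ⌈(1 + ε / 2) * k⌉₊
  have hk0 : (2 : ℝ) ≤ k := by exact_mod_cast hk
  have hn : 0 < n := by
    rcases Nat.eq_zero_or_pos n with rfl | hn
    · simp at hkn; linarith
    · exact hn
  have hm_ge : (1 + ε / 2) * k ≤ m := Nat.le_ceil _
  have hm_lt : (m : ℝ) < (1 + ε / 2) * k + 1 := Nat.ceil_lt_add_one (by positivity)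
  have hkm : k < m := by exact_mod_cast (show (k : ℝ) < m by nlinarith)
  have hr : ε / 2 * k ≤ ((m - k : ℕ) : ℝ) := by push_cast [Nat.cast_sub hkm.le]; linarith
  -- `k + 2m < (3 + ε) k + 2 ≤ (4 + ε) k` as `k ≥ 2`
  have hM : k + 2 * m ≤ ⌈4 + ε⌉₊ * k := by
    have : (4 + ε) * k ≤ (⌈4 + ε⌉₊ : ℝ) * k := by gcongr; exact Nat.le_ceil _
    exact_mod_cast (show ((k + 2 * m : ℕ) : ℝ) ≤ (⌈4 + ε⌉₊ * k : ℕ) by push_cast; nlinarith)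
  have hx : (k : ℝ) / n ≤ γ := by rw [div_le_iff₀ (by exact_mod_cast hn)]; exact hkn
  calc (n.choose k : ℝ) * ((k ^ 2).choose m : ℝ) * min (d / n) 1 ^ m
      ≤ 3 ^ (k + m) * d ^ m * ((k : ℝ) / n) ^ (m - k) :=
        choose_mul_choose_sq_mul_pow_le hn (by omega) hkm.le (by positivity) (min_le_left _ _)
    _ ≤ (max d 3 ^ ⌈4 + ε⌉₊) ^ k * (k / n * γ⁻¹ * (γ ^ (ε / 2)) ^ k) := by
        gcongr
        · exact three_pow_add_mul_pow_le_max_pow hd hM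
        · exact pow_le_mul_inv_mul_rpow_pow (by positivity) hx hγ hγ1 (by omega) hr
    _ = γ⁻¹ * (k / n) * (max d 3 ^ ⌈4 + ε⌉₊ * γ ^ (ε / 2)) ^ k := by ring
    _ ≤ γ⁻¹ * (k / n) * (1 / 2) ^ k := by gcongr

lemma exists_pos_le_one_mul_rpow_le_half {A s : ℝ} (hA : 1 ≤ A) (hs : 0 < s) :
    ∃ γ : ℝ, 0 < γ ∧ γ ≤ 1 ∧ A * γ ^ s ≤ 1 / 2 := by
  have hA0 : 0 < A := one_pos.trans_le hA
  refine ⟨(2 * A)⁻¹ ^ s⁻¹, by positivity,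
    Real.rpow_le_one (by positivity) (inv_le_one_of_one_le₀ (by linarith)) (by positivity), ?_⟩
  rw [← Real.rpow_mul (by positivity), inv_mul_cancel₀ hs.ne', Real.rpow_one]
  field_simp
  rfl

section Bernoulli

variable {ι : Type*} [Fintype ι] (p : ℝ≥0) (hp : p ≤ 1)

lemma measure_pi_bernoulli_forall_true (T : Finset ι) :
    Measure.pi (fun _ : ι => (PMF.bernoulli p hp).toMeasure) {ω | ∀ i ∈ T, ω i = true}
      = (p : ℝ≥0∞) ^ #T := by
  have hT : {ω : ι → Bool | ∀ i ∈ T, ω i = true} = (T : Set ι).pi fun _ => {true} := by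
    ext ω; simp
  rw [hT, Measure.pi_pi_finset, PMF.toMeasure_apply_singleton _ _ (measurableSet_singleton _),
    PMF.bernoulli_apply, cond_true, prod_const]

lemma measure_pi_bernoulli_exists_le_card_filter_le {κ : Type*} (𝒮 : Finset κ)
    (E : κ → Finset ι) (m : κ → ℕ) :
    Measure.pi (fun _ : ι => (PMF.bernoulli p hp).toMeasure)
        {ω | ∃ S ∈ 𝒮, m S ≤ #{i ∈ E S | ω i = true}}
      ≤ ∑ S ∈ 𝒮, ((#(E S)).choose (m S) : ℝ≥0∞) * (p : ℝ≥0∞) ^ m S := by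
  have hsub : {ω : ι → Bool | ∃ S ∈ 𝒮, m S ≤ #{i ∈ E S | ω i = true}}
      ⊆ ⋃ S ∈ 𝒮, ⋃ T ∈ (E S).powersetCard (m S), {ω | ∀ i ∈ T, ω i = true} := by
    rintro ω ⟨S, hS, hm⟩
    obtain ⟨T, hTE, hT⟩ := le_card_iff_exists_subset_card.mp hm
    simp only [Set.mem_iUnion, mem_powersetCard]
    exact ⟨S, hS, T, ⟨hTE.trans (filter_subset _ _), hT⟩, fun i hi => (mem_filter.mp (hTE hi)).2⟩
  refine (measure_mono hsub).trans <| (measure_biUnion_finset_le _ _).trans <|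
    sum_le_sum fun S _ => (measure_biUnion_finset_le _ _).trans_eq ?_
  rw [sum_congr rfl fun T hT => by
      rw [measure_pi_bernoulli_forall_true, (mem_powersetCard.mp hT).2],
    sum_const, card_powersetCard, nsmul_eq_mul]

end Bernoulli

lemma card_filter_forall_mem_le_sq {V : Type*} [Fintype V] [DecidableEq V] (S : Finset V)
    [DecidablePred fun e : {e : Sym2 V // ¬ e.IsDiag} => ∀ v ∈ e.val, v ∈ S] :
    #{e : {e : Sym2 V // ¬ e.IsDiag} | ∀ v ∈ e.val, v ∈ S} ≤ #S ^ 2 := by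
  calc #{e : {e : Sym2 V // ¬ e.IsDiag} | ∀ v ∈ e.val, v ∈ S} ≤ #S.sym2 :=
        card_le_card_of_injOn Subtype.val
          (fun e he => by rw [mem_coe, Finset.mem_sym2_iff]; exact (mem_filter.mp he).2)
          Subtype.val_injective.injOn
    _ = (#S + 1).choose 2 := card_sym2 S
    _ ≤ #S ^ 2 := by
        rw [Nat.choose_two_right]
        apply Nat.div_le_of_le_mul
        rcases Nat.eq_zero_or_pos #S with h | h
        · simp [h]
        · simp only [Nat.add_sub_cancel]
          nlinarith

lemma measure_exists_dense_subset_le {V : Type*} [Fintype V] [DecidableEq V] (p : ℝ≥0)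
    (hp : p ≤ 1) (c : ℝ) (P : ℕ → Prop) [DecidablePred P] :
    Measure.pi (fun _ : {e : Sym2 V // ¬ e.IsDiag} => (PMF.bernoulli p hp).toMeasure)
        {ω | ∃ S : Finset V, P #S ∧ c * #S ≤ #{e | ω e = true ∧ ∀ v ∈ e.val, v ∈ S}}
      ≤ ∑ S : Finset V with P #S,
          ((#S ^ 2).choose ⌈c * #S⌉₊ : ℝ≥0∞) * (p : ℝ≥0∞) ^ ⌈c * #S⌉₊ := by
  refine (measure_mono ?_).trans <| (measure_pi_bernoulli_exists_le_card_filter_le p hp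
    {S : Finset V | P #S} (fun S => {e | ∀ v ∈ e.val, v ∈ S}) fun S => ⌈c * #S⌉₊).trans ?_
  · rintro ω ⟨S, hP, hS⟩
    refine ⟨S, mem_filter.mpr ⟨mem_univ _, hP⟩, Nat.ceil_le.mpr (hS.trans_eq ?_)⟩
    rw [filter_filter]
    simp only [and_comm]
  · gcongr with S
    exact card_filter_forall_mem_le_sq S

lemma sum_choose_sq_mul_pow_ceil_le {d ε γ : ℝ} (hd : 0 ≤ d) (hε : 0 < ε) (hγ : 0 < γ)
    (hγ1 : γ ≤ 1) (hγd : max d 3 ^ ⌈4 + ε⌉₊ * γ ^ (ε / 2) ≤ 1 / 2) (n : ℕ) :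
    ∑ S : Finset (Fin n) with 2 ≤ #S ∧ (#S : ℝ) ≤ γ * n,
        ((#S ^ 2).choose ⌈(1 + ε / 2) * #S⌉₊ : ℝ) * min (d / n) 1 ^ ⌈(1 + ε / 2) * #S⌉₊
      ≤ 2 * γ⁻¹ / n := by
  rw [sum_filter, ← powerset_univ, sum_powerset_apply_card
    (fun k => if 2 ≤ k ∧ (k : ℝ) ≤ γ * n then
      ((k ^ 2).choose ⌈(1 + ε / 2) * k⌉₊ : ℝ) * min (d / n) 1 ^ ⌈(1 + ε / 2) * k⌉₊ else 0),
    card_univ, Fintype.card_fin]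
  calc ∑ k ∈ range (n + 1), n.choose k • (if 2 ≤ k ∧ (k : ℝ) ≤ γ * n then
          ((k ^ 2).choose ⌈(1 + ε / 2) * k⌉₊ : ℝ) * min (d / n) 1 ^ ⌈(1 + ε / 2) * k⌉₊ else 0)
      ≤ ∑ k ∈ range (n + 1), γ⁻¹ / n * (k * (1 / 2) ^ k) := by
        gcongr with k
        split_ifs with hk
        · rw [nsmul_eq_mul, ← mul_assoc]
          refine (choose_mul_choose_sq_mul_pow_ceil_le hd hε hγ hγ1 hγd hk.1 hk.2).trans_eq ?_
          ring
        · simp only [smul_zero]; positivity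
    _ ≤ γ⁻¹ / n * 2 := by rw [← mul_sum]; gcongr; exact sum_range_mul_half_pow_le_two _
    _ = 2 * γ⁻¹ / n := by ring

open Classical in
/-- For all `d > 0` and `ε > 0` there is `γ > 0` such that, in the Erdős–Rényi random
graph `G(n, d/n)` — here modelled by independent `Bernoulli (min (d/n) 1)` indicators,
one for each non-diagonal unordered pair of vertices of `Fin n` — the probability that
some vertex set `S` with `2 ≤ |S| ≤ γ·n` spans at least `(1 + ε/2)·|S|` edges
(i.e. has average degree at least `2 + ε`) tends to `0` as `n → ∞`. -/
theorem er_no_dense_small_subsets (d ε : ℝ) (hd : 0 < d) (hε : 0 < ε) :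
    ∃ γ : ℝ, 0 < γ ∧
      Tendsto
        (fun n : ℕ =>
          Measure.pi
            (fun _ : {e : Sym2 (Fin n) // ¬ e.IsDiag} =>
              (PMF.bernoulli (Real.toNNReal (min (d / (n : ℝ)) 1))
                (by
                  exact_mod_cast Real.toNNReal_le_one.mpr (min_le_right _ _))).toMeasure)
            {ω : {e : Sym2 (Fin n) // ¬ e.IsDiag} → Bool |
              ∃ S : Finset (Fin n), 2 ≤ S.card ∧ (S.card : ℝ) ≤ γ * (n : ℝ) ∧
                (1 + ε / 2) * (S.card : ℝ) ≤
                  ((Finset.univ.filter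
                    (fun e : {e : Sym2 (Fin n) // ¬ e.IsDiag} =>
                      ω e = true ∧ ∀ v ∈ e.val, v ∈ S)).card : ℝ)})
        atTop (𝓝 0) := by
  obtain ⟨γ, hγ, hγ1, hγd⟩ :=
    exists_pos_le_one_mul_rpow_le_half (one_le_pow₀ (le_max_of_le_right (by norm_num)) :
      1 ≤ max d 3 ^ ⌈4 + ε⌉₊) (half_pos hε)
  refine ⟨γ, hγ, tendsto_of_tendsto_of_tendsto_of_le_of_le' tendsto_const_nhds
    (by simpa using ENNReal.tendsto_ofReal (tendsto_const_div_atTop_nhds_zero_nat (2 * γ⁻¹)))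
    (.of_forall fun _ => zero_le) (.of_forall fun n => ?_)⟩
  refine (measure_mono ?_).trans <| (measure_exists_dense_subset_le _ _ (1 + ε / 2)
    fun k => 2 ≤ k ∧ (k : ℝ) ≤ γ * n).trans ?_
  · rintro ω ⟨S, h2, hSγ, hS⟩
    -- the two edge counts differ only in their `Decidable` instances
    exact ⟨S, ⟨h2, hSγ⟩, by convert hS⟩
  refine le_of_eq_of_le ?_ (ENNReal.ofReal_le_ofReal
    (sum_choose_sq_mul_pow_ceil_le hd.le hε hγ hγ1 hγd n))
  rw [ENNReal.ofReal_sum_of_nonneg fun _ _ => by positivity]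
  refine sum_congr rfl fun S _ => ?_
  rw [ENNReal.ofReal_mul (by positivity), ENNReal.ofReal_natCast,
    ENNReal.ofReal_pow (by positivity)]
  rfl
end

section
/- Fix a real number ρ > 0 and define L(x) = x^{ρ+1} · ρ·B(x, ρ+1) for real x > 0, where B(x, y) = Γ(x)Γ(y)/Γ(x+y). Then for every real t > 0, L(t·x)/L(x) tends to 1 as x tends to infinity; consequently the Yule distribution with parameter ρ, whose mass function can be written as f(k) = L(k)·k^{−(ρ+1)}, is a power-law distribution with exponent −(ρ+1). -/
/-!
`log ∘ Γ` is convex on `(0, ∞)` and increases by exactly `log y` from `y` to `y + 1`.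
Comparing its slope over `[x, x + a]` with its slopes over `[x - 1, x]` and
`[x + a, x + a + 1]` squeezes `log Γ(x + a) - log Γ(x)` between `a log (x - 1)` and
`a log (x + a)`, so `Γ(x + a) ~ Γ(x) x^a`. Hence `L(x) = ρ Γ(ρ+1) x^(ρ+1) Γ(x) / Γ(x + ρ + 1)`
tends to the nonzero constant `ρ Γ(ρ+1)`, and any such function is slowly varying.
-/

open Filter Topology

noncomputable def eulerBeta (x y : ℝ) : ℝ :=
  Real.Gamma x * Real.Gamma y / Real.Gamma (x + y)

namespace Real

lemma log_Gamma_add_one_sub_log_Gamma {y : ℝ} (hy : 0 < y) :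
    log (Gamma (y + 1)) - log (Gamma y) = log y := by
  rw [Gamma_add_one hy.ne', log_mul hy.ne' (Gamma_pos_of_pos hy).ne', add_sub_cancel_right]

variable {a x : ℝ}

lemma mul_log_sub_one_le_log_Gamma_add_sub (ha : 0 < a) (hx : 1 < x) :
    a * log (x - 1) ≤ log (Gamma (x + a)) - log (Gamma x) := by
  have h := convexOn_log_Gamma.slope_mono_adjacent (x := x - 1) (y := x) (z := x + a)
    (by simp only [Set.mem_Ioi]; linarith) (by simp only [Set.mem_Ioi]; linarith)
    (by linarith) (by linarith)
  have hstep := log_Gamma_add_one_sub_log_Gamma (y := x - 1) (by linarith)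
  rw [sub_add_cancel] at hstep
  simp only [Function.comp_apply, sub_sub_cancel, div_one, add_sub_cancel_left, hstep] at h
  rwa [le_div_iff₀ ha, mul_comm] at h

lemma log_Gamma_add_sub_le_mul_log_add (ha : 0 < a) (hx : 0 < x) :
    log (Gamma (x + a)) - log (Gamma x) ≤ a * log (x + a) := by
  have h := convexOn_log_Gamma.slope_mono_adjacent (x := x) (y := x + a) (z := x + a + 1)
    (by simp only [Set.mem_Ioi]; linarith) (by simp only [Set.mem_Ioi]; linarith)
    (by linarith) (by linarith)
  simp only [Function.comp_apply, add_sub_cancel_left, div_one,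
    log_Gamma_add_one_sub_log_Gamma (by linarith : 0 < x + a)] at h
  rwa [div_le_iff₀ ha, mul_comm] at h

lemma tendsto_log_Gamma_add_sub_log_Gamma_sub_mul_log (ha : 0 < a) :
    Tendsto (fun x => log (Gamma (x + a)) - log (Gamma x) - a * log x) atTop (𝓝 0) := by
  have hlow := (tendsto_log_comp_add_sub_log (-1)).const_mul a
  have hupp := (tendsto_log_comp_add_sub_log a).const_mul a
  rw [mul_zero] at hlow hupp
  refine tendsto_of_tendsto_of_tendsto_of_le_of_le' hlow hupp ?_ ?_
  · filter_upwards [eventually_gt_atTop 1] with x hx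
    have := mul_log_sub_one_le_log_Gamma_add_sub ha hx
    rw [← sub_eq_add_neg]
    linarith
  · filter_upwards [eventually_gt_atTop 0] with x hx
    have := log_Gamma_add_sub_le_mul_log_add ha hx
    linarith

lemma tendsto_Gamma_add_div_Gamma_mul_rpow (ha : 0 < a) :
    Tendsto (fun x => Gamma (x + a) / (Gamma x * x ^ a)) atTop (𝓝 1) := by
  have h := (continuous_exp.tendsto 0).comp (tendsto_log_Gamma_add_sub_log_Gamma_sub_mul_log ha)
  rw [exp_zero] at h
  refine h.congr' ?_
  filter_upwards [eventually_gt_atTop 0] with x hx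
  rw [Function.comp_apply, exp_sub, exp_sub, exp_log (Gamma_pos_of_pos (by linarith)),
    exp_log (Gamma_pos_of_pos hx), mul_comm, exp_mul, exp_log hx, div_div]

end Real

lemma tendsto_rpow_mul_eulerBeta {y : ℝ} (hy : 0 < y) :
    Tendsto (fun x => x ^ y * eulerBeta x y) atTop (𝓝 (Real.Gamma y)) := by
  have h := ((Real.tendsto_Gamma_add_div_Gamma_mul_rpow hy).inv₀ one_ne_zero).const_mul
    (Real.Gamma y)
  rw [inv_one, mul_one] at h
  refine h.congr' ?_
  filter_upwards [eventually_gt_atTop 0] with x hx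
  have := (Real.Gamma_pos_of_pos (add_pos hx hy)).ne'
  rw [eulerBeta, inv_div]
  ring

lemma tendsto_comp_const_mul_div_self {f : ℝ → ℝ} {c : ℝ} (hf : Tendsto f atTop (𝓝 c))
    (hc : c ≠ 0) {t : ℝ} (ht : 0 < t) :
    Tendsto (fun x => f (t * x) / f x) atTop (𝓝 1) := by
  simpa [hc, Function.comp_def, Pi.div_def] using
    (hf.comp (tendsto_id.const_mul_atTop ht)).div hf hc

/-- For `ρ > 0` and `L(x) = x^{ρ+1} · ρ·B(x, ρ+1)` (for `x > 0`): for every `t > 0`,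
`L(t·x)/L(x) → 1` as `x → ∞`, and the Yule mass function satisfies
`f(k) = L(k)·k^{−(ρ+1)}`; hence the Yule distribution with parameter `ρ` is a
power-law distribution with exponent `−(ρ+1)`. -/
theorem yule_is_powerlaw (ρ : ℝ) (hρ : 0 < ρ)
    (L : ℝ → ℝ) (hL : ∀ x : ℝ, 0 < x → L x = x ^ (ρ + 1) * (ρ * eulerBeta x (ρ + 1))) :
    (∀ t : ℝ, 0 < t → Tendsto (fun x : ℝ => L (t * x) / L x) atTop (𝓝 1)) ∧
    (∀ k : ℕ+, ρ * eulerBeta (k : ℝ) (ρ + 1) = L k * (k : ℝ) ^ (-(ρ + 1))) := by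
  have hρ₁ : 0 < ρ + 1 := by linarith
  have hLlim : Tendsto L atTop (𝓝 (ρ * Real.Gamma (ρ + 1))) := by
    refine ((tendsto_rpow_mul_eulerBeta hρ₁).const_mul ρ).congr' ?_
    filter_upwards [eventually_gt_atTop 0] with x hx
    rw [hL x hx, mul_left_comm]
  refine ⟨fun t ht => tendsto_comp_const_mul_div_self hLlim
    (mul_pos hρ (Real.Gamma_pos_of_pos hρ₁)).ne' ht, fun k => ?_⟩
  have hk : (0 : ℝ) < k := by exact_mod_cast k.pos
  rw [hL k hk, mul_right_comm, ← Real.rpow_add hk, add_neg_cancel, Real.rpow_zero, one_mul]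
end
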